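/- Let a ∈ K = F_{2^τ}((π)) and let b in an algebraic closure of K satisfy b² + b = a. Then D(a) = O (the full ring of integers) if and only if K(b) is an unramified quadratic extension of K. -/

import Mathlib

noncomputable section

/-- The finite field with `2 ^ τ` elements. -/
abbrev Fq (τ : ℕ) := GaloisField 2 τ

/-- The field of formal Laurent series `K = F_{2^τ}((π))`. -/
abbrev Kk (τ : ℕ) := LaurentSeries (Fq τ)

/-- The ring of integers `O = F_{2^τ}[[π]]`. -/
abbrev Ok (τ : ℕ) := PowerSeries (Fq τ)

/-- The Artin–Schreier defect `D(a) = ⋂_{h ∈ K} (h² + h + a)`, an intersection of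
principal fractional `O`-ideals (as `O`-submodules of `K`). -/
def ASdefect (τ : ℕ) (a : Kk τ) : Submodule (Ok τ) (Kk τ) :=
  ⨅ h : Kk τ, Submodule.span (Ok τ) {h ^ 2 + h + a}

open IntermediateField

/-- `L/K` is an unramified quadratic extension: it has degree 2 and the ramification
index is 1, i.e. the value group does not grow; for a quadratic extension of the
discretely valued field `K` this says that the valuation `ν(N_{L/K}(x))` of the norm
of every nonzero element of `L` is even. (Recall `ν(f) = f.order` on `K = F_{2^τ}((π))`.) -/
def IsUnramifiedQuadExt (τ : ℕ)
    (L : IntermediateField (Kk τ) (AlgebraicClosure (Kk τ))) : Prop :=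
  Module.finrank (Kk τ) L = 2 ∧
    ∀ x : L, x ≠ 0 → Even (HahnSeries.order (Algebra.norm (Kk τ) x))

/-! Write `℘ x = x² + x` and `c_h = h² + h + a`. If `a ∉ ℘(K)`, then `ν(c_h) ≤ 0` for every `h`,
because `℘` maps the maximal ideal of `O` onto itself (Hensel), so `D(a) = O` exactly when some
`c_h` is a unit. As the residue field is perfect, a maximal `ν(c_h)` cannot be even and negative:
subtracting `℘` of a square root of the leading term raises it. If some `c_{h₀}` is a unit, its
residue is not in `℘` of the residue field, and then every `ν(c_h)` is even. Finally
`N(u + v b) = v² c_{u/v}` for `v ≠ 0`, so the norms from `K(b)` have even valuation exactly when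
all `ν(c_h)` are even. If `a ∈ ℘(K)`, both sides fail: `D(a) = 0` and `b ∈ K`. -/

section QuadraticExtension

open Polynomial

theorem PowerBasis.norm_algebraMap_add_smul_gen {K L : Type*} [CommRing K] [CommRing L]
    [Algebra K L] (pb : PowerBasis K L) (hdim : pb.dim = 2) {a : K}
    (hgen : pb.gen ^ 2 + pb.gen = algebraMap K L a) (u v : K) :
    Algebra.norm K (algebraMap K L u + v • pb.gen) = u ^ 2 - u * v - a * v ^ 2 := by
  set B := pb.basis.reindex (finCongr hdim)
  have hB0 : B 0 = 1 := by simp [B]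
  have hB1 : B 1 = pb.gen := by simp [B]
  have hrepr (p q : K) : B.repr (algebraMap K L p + q • pb.gen) = ![p, q] := by
    ext i
    rw [← hB1, Algebra.algebraMap_eq_smul_one, ← hB0]
    fin_cases i <;> simp
  have hmul_gen : (algebraMap K L u + v • pb.gen) * pb.gen =
      algebraMap K L (v * a) + (u - v) • pb.gen := by
    rw [map_mul, ← hgen, Algebra.smul_def, Algebra.smul_def, map_sub]
    ring
  rw [Algebra.norm_eq_matrix_det B, Matrix.det_fin_two]
  simp only [Algebra.leftMulMatrix_eq_repr_mul, hB0, hB1, mul_one, hmul_gen, hrepr,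
    Matrix.cons_val_zero, Matrix.cons_val_one, Matrix.cons_val_fin_one]
  ring

variable {K E : Type*} [Field K] [Field E] [Algebra K E] {a : K} {b : E}

theorem isIntegral_of_sq_add_self_eq (hb : b ^ 2 + b = algebraMap K E a) : IsIntegral K b :=
  ⟨X ^ 2 + X - C a, by monicity!, by simp [hb]⟩

theorem minpoly_eq_of_sq_add_self_eq (hb : b ^ 2 + b = algebraMap K E a)
    (ha : ∀ h : K, h ^ 2 + h ≠ a) : minpoly K b = X ^ 2 + X - C a := by
  have hdeg : (X ^ 2 + X - C a : K[X]).natDegree = 2 := by compute_degree!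
  refine (minpoly.eq_of_irreducible_of_monic ?_ (by simp [hb]) (by monicity!)).symm
  refine irreducible_of_degree_le_three_of_not_isRoot (by simp [hdeg]) fun h hroot => ha h ?_
  simpa [sub_eq_zero] using hroot

theorem finrank_adjoin_of_sq_add_self_eq (hb : b ^ 2 + b = algebraMap K E a)
    (ha : ∀ h : K, h ^ 2 + h ≠ a) : Module.finrank K K⟮b⟯ = 2 := by
  rw [adjoin.finrank (isIntegral_of_sq_add_self_eq hb), minpoly_eq_of_sq_add_self_eq hb ha]
  compute_degree!

theorem adjoin_eq_bot_of_sq_add_self_eq (hb : b ^ 2 + b = algebraMap K E a) {h : K}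
    (hh : h ^ 2 + h = a) : K⟮b⟯ = ⊥ := by
  rw [adjoin_simple_eq_bot_iff, mem_bot]
  have hfac : (b - algebraMap K E h) * (b + algebraMap K E (h + 1)) = 0 := by
    rw [← hh, map_add, map_pow] at hb
    rw [map_add, map_one]
    linear_combination hb
  rcases mul_eq_zero.mp hfac with h0 | h0
  · exact ⟨h, (sub_eq_zero.mp h0).symm⟩
  · exact ⟨-(h + 1), by rw [map_neg]; exact (eq_neg_of_add_eq_zero_left h0).symm⟩

theorem adjoin_powerBasis_dim_of_sq_add_self_eq (hb : b ^ 2 + b = algebraMap K E a)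
    (ha : ∀ h : K, h ^ 2 + h ≠ a) :
    (adjoin.powerBasis (isIntegral_of_sq_add_self_eq hb)).dim = 2 := by
  rw [adjoin.powerBasis_dim, minpoly_eq_of_sq_add_self_eq hb ha]
  compute_degree!

theorem exists_eq_algebraMap_add_smul_gen (hb : b ^ 2 + b = algebraMap K E a)
    (ha : ∀ h : K, h ^ 2 + h ≠ a) (x : K⟮b⟯) :
    ∃ u v : K, x = algebraMap K K⟮b⟯ u + v • AdjoinSimple.gen K b := by
  obtain ⟨f, hf, rfl⟩ := (adjoin.powerBasis (isIntegral_of_sq_add_self_eq hb)).exists_eq_aeval x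
  have hf1 : f.natDegree ≤ 1 := by
    rw [adjoin_powerBasis_dim_of_sq_add_self_eq hb ha] at hf
    omega
  obtain ⟨v, u, rfl⟩ := exists_eq_X_add_C_of_natDegree_le_one hf1
  refine ⟨u, v, ?_⟩
  rw [map_add, map_mul, aeval_C, aeval_C, aeval_X, adjoin.powerBasis_gen, Algebra.smul_def,
    mul_comm, add_comm]

theorem norm_algebraMap_add_smul_gen (hb : b ^ 2 + b = algebraMap K E a)
    (ha : ∀ h : K, h ^ 2 + h ≠ a) (u v : K) :
    Algebra.norm K (algebraMap K K⟮b⟯ u + v • AdjoinSimple.gen K b) =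
      u ^ 2 - u * v - a * v ^ 2 := by
  have hint := isIntegral_of_sq_add_self_eq hb
  rw [← adjoin.powerBasis_gen hint]
  refine PowerBasis.norm_algebraMap_add_smul_gen _
    (adjoin_powerBasis_dim_of_sq_add_self_eq hb ha) ?_ u v
  rw [adjoin.powerBasis_gen hint]
  exact Subtype.ext (by simpa using hb)

end QuadraticExtension

theorem CharTwo.add_sq_add_self {R : Type*} [CommRing R] [CharP R 2] (x y : R) :
    (x + y) ^ 2 + (x + y) = (x ^ 2 + x) + (y ^ 2 + y) := by
  rw [CharTwo.add_sq]
  ring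

open scoped LaurentSeries PowerSeries

theorem PowerSeries.exists_sq_add_self_eq {R : Type*} [CommRing R] {c : R⟦X⟧}
    (hc : constantCoeff c = 0) : ∃ h : R⟦X⟧, h ^ 2 + h = c := by
  obtain ⟨h, hroot, -⟩ := HenselianRing.is_henselian (I := Ideal.span {X})
    (.X ^ 2 + .X - .C c : Polynomial R⟦X⟧) (by monicity!) 0
    (by simpa [Ideal.mem_span_singleton, X_dvd_iff] using hc) (by simp)
  exact ⟨h, by simpa [sub_eq_zero] using hroot⟩

namespace LaurentSeries

open HahnSeries

instance {R : Type*} [CommRing R] (p : ℕ) [CharP R p] : CharP R⸨X⸩ p :=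
  charP_of_injective_ringHom HahnSeries.C_injective p

theorem order_coe_nonneg {R : Type*} [Semiring R] (c : R⟦X⟧) : 0 ≤ (c : R⸨X⸩).order := by
  by_contra! h
  have hc : (c : R⸨X⸩) ≠ 0 := by rintro h0; simp [h0] at h
  exact hc (coeff_order_eq_zero.mp (by rw [PowerSeries.coeff_coe, if_pos h]))

theorem order_coe_eq_zero {R : Type*} [Semiring R] {c : R⟦X⟧}
    (hc : PowerSeries.constantCoeff c ≠ 0) : (c : R⸨X⸩).order = 0 :=
  le_antisymm (order_le_of_coeff_ne_zero (by simpa [PowerSeries.coeff_coe] using hc))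
    (order_coe_nonneg c)

theorem exists_coe_eq_of_order_nonneg {R : Type*} [Semiring R] {z : R⸨X⸩} (hz : 0 ≤ z.order) :
    ∃ c : R⟦X⟧, (c : R⸨X⸩) = z :=
  ⟨PowerSeries.X ^ z.order.toNat * z.powerSeriesPart, by
    rw [PowerSeries.coe_mul, PowerSeries.coe_pow, PowerSeries.coe_X, single_pow, one_pow,
      nsmul_one, Int.toNat_of_nonneg hz, single_order_mul_powerSeriesPart]⟩

theorem mem_span_singleton_iff_order_le {F : Type*} [Field F] {x : F⸨X⸩} (hx : x ≠ 0)
    (y : F⸨X⸩) : y ∈ Submodule.span F⟦X⟧ {x} ↔ y = 0 ∨ x.order ≤ y.order := by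
  rw [Submodule.mem_span_singleton]
  constructor
  · rintro ⟨c, rfl⟩
    rw [Algebra.smul_def, coe_algebraMap]
    rcases eq_or_ne (c : F⸨X⸩) 0 with hc | hc
    · simp [hc]
    · have := order_coe_nonneg c
      rw [order_mul hc hx]
      omega
  · rintro (rfl | hle)
    · exact ⟨0, zero_smul _ _⟩
    rcases eq_or_ne y 0 with rfl | hy
    · exact ⟨0, zero_smul _ _⟩
    have hyx : (y * x⁻¹).order + x.order = y.order := by
      rw [← order_mul (mul_ne_zero hy (inv_ne_zero hx)) hx, inv_mul_cancel_right₀ hx]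
    obtain ⟨c, hc⟩ := exists_coe_eq_of_order_nonneg (z := y * x⁻¹) (by omega)
    exact ⟨c, by rw [Algebra.smul_def, coe_algebraMap, hc, inv_mul_cancel_right₀ hx]⟩

theorem exists_sq_add_self_eq_of_order_pos {R : Type*} [CommRing R] {c : R⸨X⸩}
    (hc : 0 < c.order) : ∃ h : R⸨X⸩, h ^ 2 + h = c := by
  obtain ⟨C, rfl⟩ := exists_coe_eq_of_order_nonneg hc.le
  obtain ⟨H, hH⟩ := PowerSeries.exists_sq_add_self_eq (c := C) (by
    by_contra hC
    rw [order_coe_eq_zero hC] at hc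
    exact hc.false)
  exact ⟨H, by rw [← hH, PowerSeries.coe_add, PowerSeries.coe_pow]⟩

variable {F : Type*} [Field F] [CharP F 2] {a : F⸨X⸩}

theorem sq_add_self_add_ne_sq_add_self (ha : ∀ h : F⸨X⸩, h ^ 2 + h ≠ a) (h x : F⸨X⸩) :
    h ^ 2 + h + a ≠ x ^ 2 + x := by
  intro hx
  apply ha (h + x)
  rw [CharTwo.add_sq_add_self, ← hx, CharTwo.add_cancel_left]

theorem sq_add_self_add_ne_zero (ha : ∀ h : F⸨X⸩, h ^ 2 + h ≠ a) (h : F⸨X⸩) :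
    h ^ 2 + h + a ≠ 0 := by
  simpa using sq_add_self_add_ne_sq_add_self ha h 0

theorem order_sq_add_self_add_nonpos (ha : ∀ h : F⸨X⸩, h ^ 2 + h ≠ a) (h : F⸨X⸩) :
    (h ^ 2 + h + a).order ≤ 0 := by
  by_contra! hpos
  obtain ⟨x, hx⟩ := exists_sq_add_self_eq_of_order_pos hpos
  exact sq_add_self_add_ne_sq_add_self ha h x hx.symm

theorem exists_forall_order_sq_add_self_add_le (ha : ∀ h : F⸨X⸩, h ^ 2 + h ≠ a) :
    ∃ h₀ : F⸨X⸩, ∀ h, (h ^ 2 + h + a).order ≤ (h₀ ^ 2 + h₀ + a).order := by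
  obtain ⟨_, ⟨h₀, rfl⟩, hmax⟩ := Int.exists_greatest_of_bdd
    (P := fun z => ∃ h : F⸨X⸩, (h ^ 2 + h + a).order = z)
    ⟨0, by rintro _ ⟨h, rfl⟩; exact order_sq_add_self_add_nonpos ha h⟩ ⟨_, 0, rfl⟩
  exact ⟨h₀, fun h => hmax _ ⟨h, rfl⟩⟩

theorem constantCoeff_ne_sq_add_self (ha : ∀ h : F⸨X⸩, h ^ 2 + h ≠ a) {h : F⸨X⸩}
    {c : F⟦X⟧} (hc : (c : F⸨X⸩) = h ^ 2 + h + a) (l : F) :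
    PowerSeries.constantCoeff c ≠ l ^ 2 + l := by
  intro hl
  obtain ⟨g, hg⟩ := PowerSeries.exists_sq_add_self_eq (c := c + PowerSeries.C (l ^ 2 + l)) (by
    rw [map_add, PowerSeries.constantCoeff_C, hl, CharTwo.add_self_eq_zero])
  have hg' : (g : F⸨X⸩) ^ 2 + (g : F⸨X⸩) = (c : F⸨X⸩) + HahnSeries.C (l ^ 2 + l) := by
    rw [← PowerSeries.coe_C, ← PowerSeries.coe_pow, ← PowerSeries.coe_add,
      ← PowerSeries.coe_add, hg]
  apply sq_add_self_add_ne_sq_add_self ha h (g + (HahnSeries.C l : F⸨X⸩))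
  rw [← hc, CharTwo.add_sq_add_self, hg', ← map_pow, ← map_add, CharTwo.add_cancel_right]

theorem exists_lt_order_sq_add_self_add [PerfectRing F 2] (ha : ∀ h : F⸨X⸩, h ^ 2 + h ≠ a)
    {h₀ : F⸨X⸩} {n : ℤ} (hn : n < 0) (hord : (h₀ ^ 2 + h₀ + a).order = 2 * n) :
    ∃ h : F⸨X⸩, 2 * n < (h ^ 2 + h + a).order := by
  set c := h₀ ^ 2 + h₀ + a
  have hc : c ≠ 0 := sq_add_self_add_ne_zero ha h₀
  obtain ⟨δ, hδ⟩ := surjective_frobenius F 2 (c.coeff (2 * n))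
  rw [frobenius_def] at hδ
  have hδ0 : δ ≠ 0 := by
    rintro rfl
    rw [← hord, zero_pow two_ne_zero, eq_comm, coeff_order_eq_zero] at hδ
    exact hc hδ
  set t : F⸨X⸩ := single n δ
  have ht2 : t ^ 2 = single (2 * n) (δ ^ 2) := by rw [single_pow, two_nsmul, two_mul]
  have hlead : ((2 * n : ℤ) : WithTop ℤ) < (c - t ^ 2).orderTop := by
    refine le_orderTop_of_leadingCoeff_eq ?_ ?_ ?_
    · rw [← order_eq_orderTop_of_ne_zero hc, hord]
    · rw [ht2, orderTop_single (pow_ne_zero 2 hδ0)]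
    · rw [ht2, leadingCoeff_of_single, hδ, leadingCoeff_eq, hord]
  have ht : ((2 * n : ℤ) : WithTop ℤ) < t.orderTop := by
    rw [orderTop_single hδ0, WithTop.coe_lt_coe]
    omega
  refine ⟨h₀ + t, ?_⟩
  have hexp : (h₀ + t) ^ 2 + (h₀ + t) + a = (c - t ^ 2) + t := by
    rw [CharTwo.add_sq_add_self, CharTwo.sub_eq_add]
    ring
  rw [← WithTop.coe_lt_coe, order_eq_orderTop_of_ne_zero (sq_add_self_add_ne_zero ha _), hexp]
  exact lt_min hlead ht |>.trans_le min_orderTop_le_orderTop_add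

theorem even_order_sq_add_self_add (ha : ∀ h : F⸨X⸩, h ^ 2 + h ≠ a) {h₀ : F⸨X⸩}
    (h0 : (h₀ ^ 2 + h₀ + a).order = 0) (h : F⸨X⸩) : Even (h ^ 2 + h + a).order := by
  set c := h₀ ^ 2 + h₀ + a
  obtain ⟨t, rfl⟩ : ∃ t, h = h₀ + t := ⟨h - h₀, by ring⟩
  have hexp : (h₀ + t) ^ 2 + (h₀ + t) + a = t ^ 2 + (t + c) := by
    rw [CharTwo.add_sq_add_self]
    ring
  rcases le_or_gt 0 t.order with ht | ht
  · obtain ⟨T, rfl⟩ := exists_coe_eq_of_order_nonneg ht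
    obtain ⟨C, hC⟩ := exists_coe_eq_of_order_nonneg h0.ge
    have hres := constantCoeff_ne_sq_add_self ha hC (PowerSeries.constantCoeff T)
    rw [hexp, ← hC, ← PowerSeries.coe_pow, ← PowerSeries.coe_add, ← PowerSeries.coe_add,
      order_coe_eq_zero]
    · exact Even.zero
    · rw [map_add, map_add, map_pow]
      exact fun h => hres (CharTwo.add_eq_zero.mp (by rw [← h]; ring))
  · have ht0 : t ≠ 0 := by rintro rfl; simp at ht
    have hsq : (t ^ 2).orderTop = ((2 * t.order : ℤ) : WithTop ℤ) := by
      rw [← order_eq_orderTop_of_ne_zero (pow_ne_zero 2 ht0), order_pow, two_nsmul, two_mul]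
    have hlt : (t ^ 2).orderTop < (t + c).orderTop := by
      refine lt_of_lt_of_le ?_ min_orderTop_le_orderTop_add
      rw [hsq, ← order_eq_orderTop_of_ne_zero ht0,
        ← order_eq_orderTop_of_ne_zero (sq_add_self_add_ne_zero ha h₀), h0, ← WithTop.coe_min,
        WithTop.coe_lt_coe]
      omega
    have hord := orderTop_add_eq_left hlt
    rw [← hexp, ← order_eq_orderTop_of_ne_zero (sq_add_self_add_ne_zero ha _), hsq,
      WithTop.coe_eq_coe] at hord
    exact ⟨t.order, by rw [hord, two_mul]⟩

theorem exists_order_eq_zero_iff_forall_even [PerfectRing F 2]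
    (ha : ∀ h : F⸨X⸩, h ^ 2 + h ≠ a) :
    (∃ h : F⸨X⸩, (h ^ 2 + h + a).order = 0) ↔ ∀ h : F⸨X⸩, Even (h ^ 2 + h + a).order := by
  refine ⟨fun ⟨h₀, h0⟩ => even_order_sq_add_self_add ha h0, fun heven => ?_⟩
  obtain ⟨h₀, hmax⟩ := exists_forall_order_sq_add_self_add_le ha
  refine ⟨h₀, le_antisymm (order_sq_add_self_add_nonpos ha h₀) ?_⟩
  by_contra! hneg
  obtain ⟨n, hn⟩ := heven h₀
  obtain ⟨h, hh⟩ := exists_lt_order_sq_add_self_add ha (h₀ := h₀) (n := n) (by omega) (by omega)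
  have := hmax h
  omega

theorem iInf_span_eq_span_one_iff (ha : ∀ h : F⸨X⸩, h ^ 2 + h ≠ a) :
    ⨅ h : F⸨X⸩, Submodule.span F⟦X⟧ {h ^ 2 + h + a} = Submodule.span F⟦X⟧ {1} ↔
      ∃ h : F⸨X⸩, (h ^ 2 + h + a).order = 0 := by
  have hmem_one (y : F⸨X⸩) : y ∈ Submodule.span F⟦X⟧ {1} ↔ y = 0 ∨ 0 ≤ y.order := by
    rw [mem_span_singleton_iff_order_le one_ne_zero, order_one]
  constructor
  · intro hD
    obtain ⟨h₀, hmax⟩ := exists_forall_order_sq_add_self_add_le ha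
    have hmem : h₀ ^ 2 + h₀ + a ∈ ⨅ h : F⸨X⸩, Submodule.span F⟦X⟧ {h ^ 2 + h + a} :=
      Submodule.mem_iInf _ |>.mpr fun h =>
        (mem_span_singleton_iff_order_le (sq_add_self_add_ne_zero ha h) _).mpr (.inr (hmax h))
    rw [hD, hmem_one] at hmem
    exact ⟨h₀, le_antisymm (order_sq_add_self_add_nonpos ha h₀)
      (hmem.resolve_left (sq_add_self_add_ne_zero ha h₀))⟩
  · rintro ⟨h₀, h0⟩
    refine le_antisymm (iInf_le_of_le h₀ ?_) (le_iInf fun h => ?_)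
    · rw [Submodule.span_singleton_le_iff_mem, hmem_one, h0]
      exact .inr le_rfl
    · rw [Submodule.span_singleton_le_iff_mem, mem_span_singleton_iff_order_le
        (sq_add_self_add_ne_zero ha h), order_one]
      exact .inr (order_sq_add_self_add_nonpos ha h)

theorem forall_even_order_norm_iff {E : Type*} [Field E] [Algebra F⸨X⸩ E] {b : E}
    (hb : b ^ 2 + b = algebraMap F⸨X⸩ E a) (ha : ∀ h : F⸨X⸩, h ^ 2 + h ≠ a) :
    (∀ x : F⸨X⸩⟮b⟯, x ≠ 0 → Even (Algebra.norm F⸨X⸩ x).order) ↔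
      ∀ h : F⸨X⸩, Even (h ^ 2 + h + a).order := by
  have hnorm (u v : F⸨X⸩) :
      Algebra.norm F⸨X⸩ (algebraMap _ F⸨X⸩⟮b⟯ u + v • AdjoinSimple.gen _ b) =
        u ^ 2 + u * v + a * v ^ 2 := by
    rw [norm_algebraMap_add_smul_gen hb ha, CharTwo.sub_eq_add, CharTwo.sub_eq_add]
  constructor
  · intro heven h
    have hN := hnorm h 1
    rw [mul_one, one_pow, mul_one] at hN
    refine hN ▸ heven _ fun h0 => sq_add_self_add_ne_zero ha h ?_
    rw [← hN, h0]
    simpa using hnorm 0 0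
  · intro heven x _
    obtain ⟨u, v, rfl⟩ := exists_eq_algebraMap_add_smul_gen hb ha x
    rw [hnorm]
    rcases eq_or_ne v 0 with rfl | hv
    · rw [zero_pow two_ne_zero, mul_zero, mul_zero, add_zero, add_zero, order_pow]
      exact ⟨_, two_nsmul _⟩
    · have hfac : u ^ 2 + u * v + a * v ^ 2 = v ^ 2 * ((u / v) ^ 2 + u / v + a) := by
        field_simp
      rw [hfac, order_mul (pow_ne_zero 2 hv) (sq_add_self_add_ne_zero ha _), order_pow]
      exact Even.add ⟨_, two_nsmul _⟩ (heven _)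

end LaurentSeries

theorem ASdefect_eq_top_iff_unramified_general (τ : ℕ) (a : Kk τ)
    (b : AlgebraicClosure (Kk τ))
    (hb : b ^ 2 + b = algebraMap (Kk τ) (AlgebraicClosure (Kk τ)) a) :
    ASdefect τ a = Submodule.span (Ok τ) {(1 : Kk τ)} ↔
      IsUnramifiedQuadExt τ ((Kk τ)⟮b⟯) := by
  by_cases ha : ∀ h : Kk τ, h ^ 2 + h ≠ a
  · rw [ASdefect, LaurentSeries.iInf_span_eq_span_one_iff ha,
      LaurentSeries.exists_order_eq_zero_iff_forall_even ha, IsUnramifiedQuadExt,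
      ← LaurentSeries.forall_even_order_norm_iff hb ha]
    exact (and_iff_right (finrank_adjoin_of_sq_add_self_eq hb ha)).symm
  · push Not at ha
    obtain ⟨h, hh⟩ := ha
    refine iff_of_false (fun hD => ?_) fun hL => ?_
    · have hbot : ASdefect τ a = ⊥ := eq_bot_iff.mpr <| iInf_le_of_le h <| by
        rw [CharTwo.add_eq_zero.mpr hh, Submodule.span_zero_singleton]
      rw [hbot, eq_comm, Submodule.span_singleton_eq_bot] at hD
      exact one_ne_zero hD
    · have hrank := hL.1
      rw [adjoin_eq_bot_of_sq_add_self_eq hb hh, IntermediateField.finrank_bot] at hrank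
      norm_num at hrank

/-- for `b` in an algebraic closure of `K` with `b² + b = a`,
`D(a) = O` if and only if `K(b)/K` is an unramified quadratic extension. -/
theorem ASdefect_eq_top_iff_unramified (τ : ℕ) (hτ : 0 < τ) (a : Kk τ)
    (b : AlgebraicClosure (Kk τ))
    (hb : b ^ 2 + b = algebraMap (Kk τ) (AlgebraicClosure (Kk τ)) a) :
    ASdefect τ a = Submodule.span (Ok τ) {(1 : Kk τ)} ↔
      IsUnramifiedQuadExt τ ((Kk τ)⟮b⟯) :=
  ASdefect_eq_top_iff_unramified_general τ a b hb
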